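/- Let G be a group, φ an automorphism of G, and H a normal subgroup of G with φ(H) = H; let φ̄ be the induced automorphism of G/H. Suppose that for every g ∈ G the automorphism (τ_g ∘ φ)|_H of H (where τ_g is the inner automorphism x ↦ g·x·g⁻¹) has exactly one Reidemeister class. Then the quotient map G → G/H induces a bijection between the Reidemeister classes of φ and the Reidemeister classes of φ̄: the preimage of each Reidemeister class of φ̄ is exactly one Reidemeister class of φ. In particular, R(φ) = R(φ̄). -/

import Mathlib

/-!
If `ψ (ḡ₂) = h̄ ḡ₁ ψ(h̄)⁻¹` in `G ⧸ H`, then `g₂ = a n` with `a = h g₁ φ(h)⁻¹ ∼ g₁` and `n ∈ H`, so it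
suffices that `a ∼ a n` for every `n ∈ H`. Conjugating by `a`, this is the statement that the
twisted class of `1` under `τ_{φ(a)} ∘ φ` restricted to `H` is all of `H`, which is the hypothesis.
-/

/-- Twisted conjugacy relation for an automorphism `φ` of `G`:
`x ∼ y` iff `y = h * x * φ(h)⁻¹` for some `h`. -/
def twistedConj {G : Type*} [Group G] (φ : G ≃* G) (x y : G) : Prop :=
  ∃ h : G, y = h * x * (φ h)⁻¹

/-- The set of Reidemeister (twisted conjugacy) classes of `φ`.
Its cardinality is the Reidemeister number `R(φ)`. -/
def ReidemeisterClasses {G : Type*} [Group G] (φ : G ≃* G) := Quot (twistedConj φ)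

theorem Quot.map_bijective_of_iff {α β : Type*} {r : α → α → Prop} {s : β → β → Prop}
    (hs : Equivalence s) {f : α → β} (hf : Function.Surjective f)
    (hfr : ∀ x y, s (f x) (f y) ↔ r x y) :
    Function.Bijective (Quot.map f fun x y => (hfr x y).2) := by
  refine ⟨?_, Quot.map_surjective _ hf⟩
  rintro ⟨x⟩ ⟨y⟩ hxy
  exact Quot.sound <| (hfr x y).1 <| hs.eqvGen_iff.1 <| Quot.eqvGen_exact hxy

section TwistedConj

variable {G : Type*} [Group G]

theorem twistedConj_equivalence (φ : G ≃* G) : Equivalence (twistedConj φ) where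
  refl _ := ⟨1, by simp⟩
  symm := by
    rintro x y ⟨h, rfl⟩
    exact ⟨h⁻¹, by simp [mul_assoc]⟩
  trans := by
    rintro x y z ⟨h, rfl⟩ ⟨k, rfl⟩
    exact ⟨k * h, by simp [mul_assoc]⟩

theorem twistedConj.map {K : Type*} [Group K] {φ : G ≃* G} {ψ : K ≃* K} (f : G →* K)
    (hf : ∀ g, ψ (f g) = f (φ g)) {x y : G} (hxy : twistedConj φ x y) :
    twistedConj ψ (f x) (f y) := by
  obtain ⟨h, rfl⟩ := hxy
  exact ⟨f h, by simp [hf]⟩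

theorem twistedConj_mul_of_mem {φ : G ≃* G} {H : Subgroup G}
    (hone : ∀ g : G, ∀ h₁ h₂ : H, ∃ h : H, (h₂ : G) = ↑h * ↑h₁ * (g * φ ↑h * g⁻¹)⁻¹)
    (a : G) {n : G} (hn : n ∈ H) : twistedConj φ a (a * n) := by
  obtain ⟨p, hp⟩ := hone (φ a) 1 ⟨n, hn⟩
  refine ⟨a * p * a⁻¹, ?_⟩
  simp only [OneMemClass.coe_one, mul_one] at hp
  simp only [hp, map_mul, map_inv]
  group

end TwistedConj

theorem stmt19_general {G : Type*} [Group G] (φ : G ≃* G) (H : Subgroup G) [H.Normal]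
    (ψ : (G ⧸ H) ≃* (G ⧸ H))
    (hψ : ∀ g : G, ψ (QuotientGroup.mk g) = QuotientGroup.mk (φ g))
    (hone : ∀ g : G, ∀ h₁ h₂ : H, ∃ h : H, (h₂ : G) = ↑h * ↑h₁ * (g * φ ↑h * g⁻¹)⁻¹) :
    (∀ g₁ g₂ : G,
      twistedConj ψ (QuotientGroup.mk g₁) (QuotientGroup.mk g₂) ↔ twistedConj φ g₁ g₂) ∧
    Cardinal.mk (ReidemeisterClasses φ) = Cardinal.mk (ReidemeisterClasses ψ) := by
  have hrel : ∀ g₁ g₂ : G,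
      twistedConj ψ (QuotientGroup.mk g₁) (QuotientGroup.mk g₂) ↔ twistedConj φ g₁ g₂ := by
    refine fun g₁ g₂ => ⟨fun ⟨q, hq⟩ => ?_, twistedConj.map (QuotientGroup.mk' H) hψ⟩
    obtain ⟨h, rfl⟩ := QuotientGroup.mk_surjective q
    set a := h * g₁ * (φ h)⁻¹
    have ha : (QuotientGroup.mk a : G ⧸ H) = QuotientGroup.mk g₂ := by
      rw [hq, hψ]
      rfl
    rw [← mul_inv_cancel_left a g₂]
    exact (twistedConj_equivalence φ).trans ⟨h, rfl⟩
      (twistedConj_mul_of_mem hone a (QuotientGroup.eq.1 ha))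
  exact ⟨hrel, Cardinal.mk_congr <| Equiv.ofBijective _ <|
    Quot.map_bijective_of_iff (twistedConj_equivalence ψ) QuotientGroup.mk_surjective hrel⟩

/-- If every automorphism `(τ_g ∘ φ)|_H` of the `φ`-invariant normal subgroup `H` has
exactly one Reidemeister class, then the quotient map induces a bijection between
Reidemeister classes of `φ` and of the induced automorphism `ψ` of `G ⧸ H`; in
particular `R(φ) = R(ψ)`. -/
theorem stmt19 {G : Type*} [Group G] (φ : G ≃* G) (H : Subgroup G) [H.Normal]
    (hH : ∀ x : G, x ∈ H ↔ φ x ∈ H)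
    (ψ : (G ⧸ H) ≃* (G ⧸ H))
    (hψ : ∀ g : G, ψ (QuotientGroup.mk g) = QuotientGroup.mk (φ g))
    (hone : ∀ g : G, ∀ h₁ h₂ : H, ∃ h : H, (h₂ : G) = ↑h * ↑h₁ * (g * φ ↑h * g⁻¹)⁻¹) :
    (∀ g₁ g₂ : G,
      twistedConj ψ (QuotientGroup.mk g₁) (QuotientGroup.mk g₂) ↔ twistedConj φ g₁ g₂) ∧
    Cardinal.mk (ReidemeisterClasses φ) = Cardinal.mk (ReidemeisterClasses ψ) :=
  stmt19_general φ H ψ hψ hone
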